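/- For a pair (a, x) of coprime integers with 1 ≤ a ≤ x, (a, x)_q = N_q((a+x)/a), the numerator of the q-deformation of the rational number (a+x)/a. -/

import Mathlib

open Polynomial

/-- The `q`-integer `[c]_q = 1 + q + ⋯ + q^{c-1}` as a polynomial in `ℤ[q]`. -/
noncomputable def qInt (c : ℕ) : Polynomial ℤ := ∑ i ∈ Finset.range c, X ^ i

/-- The polynomial `(a, b)_q ∈ ℤ[q]` associated to a pair of coprime positive
integers: `(1, n)_q = (n, 1)_q = [n+1]_q`; if `a < b` then
`(a,b)_q = (a-r, r)_q + q·(a, b-a)_q` with `r = b % a`; if `a > b` then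
`(a,b)_q = (a-b, b)_q + q^⌈a/b⌉·(r, b-r)_q` with `r = a % b`.
(Values on non-coprime or zero inputs are junk.) -/
noncomputable def W : ℕ → ℕ → Polynomial ℤ
  | 1, b => qInt (b + 1)
  | a, 1 => qInt (a + 1)
  | 0, _ => 0
  | _, 0 => 0
  | a + 2, b + 2 =>
    if a < b then
      W (a + 2 - (b + 2) % (a + 2)) ((b + 2) % (a + 2)) + X * W (a + 2) (b - a)
    else
      W (a - b) (b + 2) +
        X ^ ((a + 2 + (b + 2) - 1) / (b + 2)) *
          W ((a + 2) % (b + 2)) (b + 2 - (a + 2) % (b + 2))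
  termination_by a b => a + b
  decreasing_by
  · have := Nat.mod_lt (b + 2) (show 0 < a + 2 by omega); omega
  · omega
  · omega
  · have := Nat.mod_lt (a + 2) (show 0 < b + 2 by omega); omega

/-- The sequence of digits of the negative continued fraction expansion
`x/a = [c₁, …, c_l]⁻` (each `cᵢ = ⌈·⌉` of the current fraction). By convention
`ncfDigits x 0 = []` (for `1/0 = ∞`) and `ncfDigits x 1 = [x]`. -/
def ncfDigits : ℕ → ℕ → List ℕ
  | _, 0 => []
  | x, 1 => [x]
  | x, a + 2 =>
      (x + (a + 2) - 1) / (a + 2) ::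
        ncfDigits (a + 2) ((x + (a + 2) - 1) / (a + 2) * (a + 2) - x)
  termination_by x a => a
  decreasing_by
    have := Nat.div_mul_le_self (x + (a + 2) - 1) (a + 2); omega

/-- The (coprime) numerator and denominator of the Morier-Genoud–Ovsienko
`q`-deformation of the negative continued fraction `[c₁, …, c_l]⁻`, computed by
the continuant recursion `(N, D) ↦ ([c]_q·N - q^{c-1}·D, N)`, with `(1, 0)` for
the empty list. -/
noncomputable def qCF : List ℕ → Polynomial ℤ × Polynomial ℤ
  | [] => (1, 0)
  | c :: rest =>
      let p := qCF rest
      (qInt c * p.1 - X ^ (c - 1) * p.2, p.1)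

/-- Numerator `N_q(x/a)` of the Morier-Genoud–Ovsienko `q`-rational `[x/a]_q`. -/
noncomputable def Nq (x a : ℕ) : Polynomial ℤ := (qCF (ncfDigits x a)).1

/-- Denominator `D_q(x/a)` of the Morier-Genoud–Ovsienko `q`-rational `[x/a]_q`. -/
noncomputable def Dq (x a : ℕ) : Polynomial ℤ := (qCF (ncfDigits x a)).2

/-- The normalized Jones polynomial `J_{x/a}(q) = q·N_q(x/a) + (1-q)·D_q(x/a)`. -/
noncomputable def Jq (x a : ℕ) : Polynomial ℤ := X * Nq x a + (1 - X) * Dq x a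

/-!
Adding `1` to `x/s` raises the first digit of its negative continued fraction by one, and
since `[c+1]_q = 1 + q·[c]_q` this gives `N_q((s+x)/s) = q·N_q(x/s) + D_q(x/s)`. As
`x/(t+x) = [1, (t+x)/t]⁻`, it follows that `N_q(x/(t+x)) = q·N_q(x/t)`. With these two rules
the map `(s, x) ↦ N_q((s+x)/s)` obeys the base cases and both branches of the recursion
defining `(s, x)_q`, so the two agree by induction on `s + x`.
-/

theorem W_one_left (b : ℕ) : W 1 b = qInt (b + 1) := W.eq_1 b

theorem W_one_right (a : ℕ) : W a 1 = qInt (a + 1) := by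
  by_cases ha : a = 1
  · rw [ha, W_one_left]
  · exact W.eq_2 a ha

theorem W_of_lt {s x : ℕ} (hs : 2 ≤ s) (h : s < x) :
    W s x = W (s - x % s) (x % s) + X * W s (x - s) := by
  obtain ⟨s, rfl⟩ := Nat.exists_eq_add_of_le' hs
  obtain ⟨x, rfl⟩ := Nat.exists_eq_add_of_le' (hs.trans h.le)
  rw [W, if_pos (by omega), show x + 2 - (s + 2) = x - s by omega]

theorem W_of_gt {s x : ℕ} (hx : 2 ≤ x) (h : x < s) :
    W s x = W (s - x) x + X ^ ((s + x - 1) / x) * W (s % x) (x - s % x) := by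
  obtain ⟨s, rfl⟩ := Nat.exists_eq_add_of_le' (hx.trans h.le)
  obtain ⟨x, rfl⟩ := Nat.exists_eq_add_of_le' hx
  rw [W, if_neg (by omega), show s + 2 - (x + 2) = s - x by omega]

theorem qInt_one : qInt 1 = 1 := by simp [qInt]

theorem ncfDigits_of_add_eq_mul {x a b c : ℕ} (h : x + b = c * a) (hb : b < a) :
    ncfDigits x a = c :: ncfDigits a b := by
  have hc : (x + a - 1) / a = c :=
    Nat.div_eq_of_lt_le (by omega) (by rw [add_mul, one_mul]; omega)
  obtain _ | _ | a := a
  · omega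
  · obtain rfl : b = 0 := by omega
    simp_all [ncfDigits]
  · have h' : x + b = c * (a + 2) := h
    rw [ncfDigits, hc, show c * (a + 2) - x = b by omega]

theorem Nq_of_add_eq_mul {x a b c : ℕ} (h : x + b = c * a) (hb : b < a) :
    Nq x a = qInt c * Nq a b - X ^ (c - 1) * Dq a b := by
  rw [Nq, ncfDigits_of_add_eq_mul h hb]
  rfl

theorem Dq_of_add_eq_mul {x a b c : ℕ} (h : x + b = c * a) (hb : b < a) :
    Dq x a = Nq a b := by
  rw [Dq, ncfDigits_of_add_eq_mul h hb]
  rfl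

theorem exists_add_eq_mul (x : ℕ) {a : ℕ} (ha : 0 < a) : ∃ c b, x + b = c * a ∧ b < a := by
  have := Nat.div_add_mod' (x + a - 1) a
  have := Nat.mod_lt (x + a - 1) ha
  exact ⟨(x + a - 1) / a, a - 1 - (x + a - 1) % a, by omega, by omega⟩

theorem Nq_zero_right (x : ℕ) : Nq x 0 = 1 := by simp [Nq, ncfDigits, qCF]

theorem Nq_one_right (p : ℕ) : Nq p 1 = qInt p := by simp [Nq, ncfDigits, qCF]

theorem Dq_self_add {s x : ℕ} (hs : 0 < s) : Dq (s + x) s = Dq x s := by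
  obtain ⟨c, b, h, hb⟩ := exists_add_eq_mul x hs
  rw [Dq_of_add_eq_mul h hb, Dq_of_add_eq_mul (c := c + 1) (by rw [add_mul, one_mul]; omega) hb]

theorem Nq_self_add {s x : ℕ} (hs : 0 < s) (hx : 0 < x) :
    Nq (s + x) s = X * Nq x s + Dq x s := by
  obtain ⟨c, b, h, hb⟩ := exists_add_eq_mul x hs
  obtain ⟨c, rfl⟩ : ∃ c', c = c' + 1 := Nat.exists_eq_succ_of_ne_zero (by rintro rfl; omega)
  have h' : s + x + b = (c + 1 + 1) * s := by rw [add_mul _ 1, one_mul]; omega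
  rw [Nq_of_add_eq_mul h' hb, Nq_of_add_eq_mul h hb, Dq_of_add_eq_mul h hb, qInt, qInt,
    geom_sum_succ]
  simp only [Nat.add_sub_cancel]
  ring

theorem Nq_add_self {x t : ℕ} (hx : 0 < x) (ht : 0 < t) : Nq x (t + x) = X * Nq x t := by
  rw [Nq_of_add_eq_mul (c := 1) (b := t) (by ring) (by omega), qInt_one, Nq_self_add ht hx,
    Dq_self_add ht]
  ring

theorem Nq_add_mul_self {x t : ℕ} (k : ℕ) (hx : 0 < x) (ht : 0 < t) :
    Nq x (t + k * x) = X ^ k * Nq x t := by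
  induction k with
  | zero => simp
  | succ k ih =>
    rw [add_mul, one_mul, ← add_assoc, Nq_add_self hx (by omega), ih, pow_succ]
    ring

theorem Nq_succ_self (n : ℕ) : Nq (n + 1) n = qInt (n + 1) := by
  induction n with
  | zero => rw [Nq_zero_right, qInt_one]
  | succ n ih =>
    have hNq : Nq 1 (n + 1) = X ^ n := by
      simpa [add_comm 1 n, Nq_one_right, qInt_one] using Nq_add_mul_self n one_pos one_pos
    rw [Nq_self_add n.succ_pos one_pos, Dq_of_add_eq_mul (c := 1) (by omega) n.lt_succ_self,
      ih, hNq, qInt, qInt, Finset.sum_range_succ _ (n + 1)]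
    ring

theorem Nq_self_add_of_mod_pos {s x : ℕ} (hs : 0 < s) (hr : 0 < x % s) :
    Nq (s + x) s = Nq s (s - x % s) + X * Nq x s := by
  have := Nat.div_add_mod' x s
  have := Nat.mod_lt x hs
  rw [Nq_self_add hs (by omega),
    Dq_of_add_eq_mul (c := x / s + 1) (b := s - x % s) (by rw [add_mul, one_mul]; omega)
      (by omega)]
  ring

theorem Nq_self_add_of_lt {s x : ℕ} (hx : 0 < x) (h : x < s) (hr : 0 < s % x) :
    Nq (s + x) s = Nq s (s - x) + X ^ ((s + x - 1) / x) * Nq x (s % x) := by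
  have hs := Nat.mod_add_div' s x
  have := Nat.mod_lt s hx
  have hexp : (s + x - 1) / x = s / x + 1 :=
    Nat.div_eq_of_lt_le (by rw [add_mul, one_mul]; omega)
      (by rw [add_mul, add_mul, one_mul]; omega)
  have hNq : Nq x s = X ^ (s / x) * Nq x (s % x) := by
    conv_lhs => rw [← hs]
    exact Nq_add_mul_self _ hx hr
  rw [Nq_self_add (hx.trans h) hx,
    Dq_of_add_eq_mul (c := 1) (b := s - x) (by omega) (by omega), hNq, hexp, pow_succ]
  ring

theorem coprime_mod_of_coprime {a x : ℕ} (h : Nat.Coprime a x) : Nat.Coprime (x % a) a := by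
  rwa [Nat.Coprime, ← Nat.gcd_rec]

theorem mod_pos_of_coprime {a x : ℕ} (h : Nat.Coprime a x) (ha : a ≠ 1) : 0 < x % a :=
  Nat.pos_of_ne_zero fun h0 => ha (by simpa [h0] using coprime_mod_of_coprime h)

theorem W_eq_Nq_general (a x : ℕ) (hco : Nat.Coprime a x) :
    W a x = Nq (a + x) a := by
  induction h : a + x using Nat.strong_induction_on generalizing a x with
  | _ n ih =>
  subst h
  obtain rfl | rfl | ha : a = 0 ∨ a = 1 ∨ 2 ≤ a := by omega
  · obtain rfl := (Nat.coprime_zero_left x).mp hco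
    rw [W_one_right, Nq_zero_right, qInt_one]
  · rw [W_one_left, Nq_one_right, add_comm]
  obtain rfl | rfl | hx : x = 0 ∨ x = 1 ∨ 2 ≤ x := by omega
  · obtain rfl := (Nat.coprime_zero_right a).mp hco
    omega
  · rw [W_one_right, Nq_succ_self]
  rcases lt_trichotomy a x with h | rfl | h
  · have hr := Nat.mod_lt x (by omega : 0 < a)
    rw [W_of_lt ha h,
      ih _ (by omega) _ _
        ((Nat.coprime_sub_self_left hr.le).mpr (coprime_mod_of_coprime hco).symm) rfl,
      ih _ (by omega) _ _ ((Nat.coprime_sub_self_right h.le).mpr hco) rfl,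
      Nat.sub_add_cancel hr.le, Nat.add_sub_cancel' h.le,
      Nq_self_add_of_mod_pos (by omega) (mod_pos_of_coprime hco (by omega))]
  · obtain rfl := (Nat.coprime_self a).mp hco
    omega
  · have hr := Nat.mod_lt a (by omega : 0 < x)
    rw [W_of_gt hx h, ih _ (by omega) _ _ ((Nat.coprime_sub_self_left h.le).mpr hco) rfl,
      ih _ (by omega) _ _
        ((Nat.coprime_sub_self_right hr.le).mpr (coprime_mod_of_coprime hco.symm)) rfl,
      Nat.sub_add_cancel h.le, Nat.add_sub_cancel' hr.le,
      Nq_self_add_of_lt (by omega) h (mod_pos_of_coprime hco.symm (by omega))]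

/-- For coprime `1 ≤ a ≤ x`: `(a, x)_q = N_q((a+x)/a)`. -/
theorem W_eq_Nq (a x : ℕ) (hco : Nat.Coprime a x) (ha : 1 ≤ a) (hax : a ≤ x) :
    W a x = Nq (a + x) a :=
  W_eq_Nq_general a x hco
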